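/- Strong completeness of SDKH: every SDKH-consistent set of DKH-formulas is satisfiable in some pointed model; equivalently, for every set Γ of formulas and formula φ, if Γ semantically entails φ then φ is derivable from Γ in SDKH. -/

import Mathlib

namespace DKH

/-- Groups of agents: subsets of the finite agent set `I = {i_0, …, i_{n-1}}`. -/
abbrev Grp (n : ℕ) := Finset (Fin n)

/-- The language DKH: φ ::= ⊤ | p | ¬φ | (φ∧φ) | K_G φ | Kh_G φ. -/
inductive Formula (P : Type) (n : ℕ) : Type
  | top  : Formula P n
  | atom : P → Formula P n
  | neg  : Formula P n → Formula P n
  | and  : Formula P n → Formula P n → Formula P n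
  | K    : Grp n → Formula P n → Formula P n
  | Kh   : Grp n → Formula P n → Formula P n

instance {P n} : Inhabited (Formula P n) := ⟨.top⟩

namespace Formula
/-- Defined implication φ → ψ := ¬(φ ∧ ¬ψ). -/
def imp {P n} (φ ψ : Formula P n) : Formula P n := .neg (φ.and ψ.neg)
/-- Defined falsum ⊥ := ¬⊤. -/
def bot {P : Type} {n : ℕ} : Formula P n := .neg .top
end Formula

/-- A model ⟨S, {∼_i}, {A_G}, {→_a}, V⟩. -/
structure KhModel (P : Type) (n : ℕ) where
  State : Type
  Act : Type
  sim : Fin n → State → State → Prop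
  sim_equiv : ∀ i, Equivalence (sim i)
  A : Grp n → Set Act
  A_empty : A ∅ = ∅
  A_disj : ∀ G H : Grp n, G ⊂ H → A G ∩ A H = ∅
  tr : Act → State → State → Prop
  V : P → Set State

/-- Distributed indistinguishability: s ∼_G t iff s ∼_i t for every i ∈ G. -/
def gsim {P n} (M : KhModel P n) (G : Grp n) (s t : M.State) : Prop :=
  ∀ i ∈ G, M.sim i s t

/-- Distributed actions: atomic group actions, or joint tuples ⟨d_0,…,d_k⟩. -/
inductive DAct (Act : Type) : Type
  | atom : Act → DAct Act
  | joint : List (DAct Act) → DAct Act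

mutual
/-- Distributed transition relation: →_{⟨d_0,…,d_k⟩} = ⋂_j →_{d_j}. -/
def dtr {Act State : Type} (tr : Act → State → State → Prop) :
    DAct Act → State → State → Prop
  | .atom a, s, t => tr a s t
  | .joint ds, s, t => dtrList tr ds s t

def dtrList {Act State : Type} (tr : Act → State → State → Prop) :
    List (DAct Act) → State → State → Prop
  | [], _, _ => True
  | d :: ds, s, t => dtr tr d s t ∧ dtrList tr ds s t
end

/-- `Gs` is a partial partition of `G`: a family of nonempty, pairwise disjoint
blocks, all included in `G` (i.e. a partition of a subset of `G`). -/
def PartialPartition {n : ℕ} (G : Grp n) (Gs : List (Grp n)) : Prop :=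
  (∀ B ∈ Gs, B ≠ ∅) ∧ Gs.Pairwise (fun B C => Disjoint B C) ∧ (∀ B ∈ Gs, B ⊆ G)

/-- The fixed ordering on mutually disjoint nonempty groups: G ≺ H iff the
minimal index of an agent in G is below that of H. -/
def grpLt {n : ℕ} (B C : Grp n) : Prop := B.min < C.min

/-- Membership in the set A*_G of distributed actions of group G:
the closure of A^+_G = ⋃_{G'⊆G} A_{G'} under forming joint actions
⟨d_0,…,d_k⟩ ∈ A*_{G_0} × ⋯ × A*_{G_k} for non-trivial partial partitions
{G_0,…,G_k} of G listed in the fixed order ≺. -/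
inductive star {n : ℕ} {Act : Type} (A : Grp n → Set Act) : Grp n → DAct Act → Prop
  | base {G G' : Grp n} {a : Act} :
      G' ⊆ G → a ∈ A G' → star A G (.atom a)
  | joint {G : Grp n} {Gs : List (Grp n)} {ds : List (DAct Act)} :
      2 ≤ Gs.length → PartialPartition G Gs → Gs.Chain' grpLt →
      List.Forall₂ (star A) Gs ds → star A G (.joint ds)

/-- Membership in A^+_G = ⋃_{G'⊆G} A_{G'} (as a set of distributed actions). -/
def inAplus {n : ℕ} {Act : Type} (A : Grp n → Set Act) (G : Grp n) (d : DAct Act) : Prop :=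
  ∃ G' : Grp n, G' ⊆ G ∧ ∃ a ∈ A G', d = .atom a

/-- d is executable on X if every s ∈ X has a d-successor. -/
def ExecutableOn {P n} (M : KhModel P n) (d : DAct M.Act) (X : Set M.State) : Prop :=
  ∀ s ∈ X, ∃ t, dtr M.tr d s t

/-- A strategy of group G: a partial function from ∼_G-equivalence classes to
A*_G such that the prescribed action is executable on the class. -/
structure Strategy {P n} (M : KhModel P n) (G : Grp n) where
  act : M.State → Option (DAct M.Act)
  uniform : ∀ s t, gsim M G s t → act s = act t
  mem_star : ∀ s d, act s = some d → star M.A G d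
  exec : ∀ s d, act s = some d → ∀ t, gsim M G s t → ∃ u, dtr M.tr d t u

/-- One step of an execution: [s]_G →_{σ([s]_G)} [t]_G. -/
def stepRel {P n} {M : KhModel P n} {G : Grp n} (σ : Strategy M G) (s t : M.State) : Prop :=
  ∃ d, σ.act s = some d ∧ ∃ u v, gsim M G s u ∧ gsim M G t v ∧ dtr M.tr d u v

/-- Leaf-nodes of the finite complete executions of σ starting from [s]_G,
as a ∼_G-closed set of states. -/
def CELeaf {P n} {M : KhModel P n} {G : Grp n} (σ : Strategy M G) (s : M.State) :
    Set M.State :=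
  {t | ∃ (m : ℕ) (f : ℕ → M.State), gsim M G s (f 0) ∧
    (∀ j < m, stepRel σ (f j) (f (j+1))) ∧ σ.act (f m) = none ∧ gsim M G (f m) t}

/-- There is an infinite (hence complete) execution of σ starting from [s]_G. -/
def InfiniteFrom {P n} {M : KhModel P n} {G : Grp n} (σ : Strategy M G) (s : M.State) : Prop :=
  ∃ f : ℕ → M.State, gsim M G s (f 0) ∧ ∀ j, stepRel σ (f j) (f (j+1))

/-- Inner-nodes of the complete executions of σ starting from [s]_G,
as a ∼_G-closed set of states. -/
def CEInner {P n} {M : KhModel P n} {G : Grp n} (σ : Strategy M G) (s : M.State) :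
    Set M.State :=
  {t | (∃ (m : ℕ) (f : ℕ → M.State), gsim M G s (f 0) ∧
          (∀ j < m, stepRel σ (f j) (f (j+1))) ∧ σ.act (f m) = none ∧
          ∃ j < m, gsim M G (f j) t) ∨
       (∃ f : ℕ → M.State, gsim M G s (f 0) ∧
          (∀ j, stepRel σ (f j) (f (j+1))) ∧ ∃ j, gsim M G (f j) t)}

/-- Truth at a pointed model. -/
def Sat {P n} (M : KhModel P n) : M.State → Formula P n → Prop
  | _, .top => True
  | s, .atom p => s ∈ M.V p
  | s, .neg φ => ¬ Sat M s φ
  | s, .and φ ψ => Sat M s φ ∧ Sat M s ψ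
  | s, .K G φ => ∀ t, gsim M G s t → Sat M t φ
  | s, .Kh G φ => ∃ σ : Strategy M G,
      (∀ t ∈ CELeaf σ s, Sat M t φ) ∧ ¬ InfiniteFrom σ s

/-- Boolean evaluation treating ⊤, ¬, ∧ as connectives and everything else
as atoms; used to define propositional tautologies. -/
def beval {P n} (v : Formula P n → Bool) : Formula P n → Bool
  | .top => true
  | .atom p => v (.atom p)
  | .neg φ => !(beval v φ)
  | .and φ ψ => beval v φ && beval v ψ
  | .K G φ => v (.K G φ)
  | .Kh G φ => v (.Kh G φ)

/-- Instances of propositional tautologies. -/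
def IsTaut {P n} (φ : Formula P n) : Prop := ∀ v, beval v φ = true

/-- The proof system SDKH. -/
inductive Provable {P : Type} {n : ℕ} : Formula P n → Prop
  | taut {φ} : IsTaut φ → Provable φ
  | distK {G : Grp n} {φ ψ} :
      Provable (((Formula.K G φ).and (Formula.K G (φ.imp ψ))).imp (Formula.K G ψ))
  | axT {G : Grp n} {φ} : Provable ((Formula.K G φ).imp φ)
  | ax4 {G : Grp n} {φ} : Provable ((Formula.K G φ).imp (Formula.K G (Formula.K G φ)))
  | ax5 {G : Grp n} {φ} :
      Provable ((Formula.neg (Formula.K G φ)).imp (Formula.K G (Formula.neg (Formula.K G φ))))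
  | axKMono {G H : Grp n} {φ} : G ⊆ H → Provable ((Formula.K G φ).imp (Formula.K H φ))
  | axKhMono {G H : Grp n} {φ} : G ⊆ H → Provable ((Formula.Kh G φ).imp (Formula.Kh H φ))
  | axKtoKh {G : Grp n} {φ} : Provable ((Formula.K G φ).imp (Formula.Kh G φ))
  | axEmpKhtoK {φ} : Provable ((Formula.Kh ∅ φ).imp (Formula.K ∅ φ))
  | axKhtoKKh {G : Grp n} {φ} : Provable ((Formula.Kh G φ).imp (Formula.K G (Formula.Kh G φ)))
  | axEmpMono {G : Grp n} {φ ψ} :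
      Provable ((Formula.K ∅ (φ.imp ψ)).imp (Formula.K ∅ ((Formula.Kh G φ).imp (Formula.Kh G ψ))))
  | axKhbot {G : Grp n} : Provable ((Formula.Kh G Formula.bot).imp Formula.bot)
  | axKhtoKhK {G : Grp n} {φ} : Provable ((Formula.Kh G φ).imp (Formula.Kh G (Formula.K G φ)))
  | axKhKh {G : Grp n} {φ} : Provable ((Formula.Kh G (Formula.Kh G φ)).imp (Formula.Kh G φ))
  | mp {φ ψ} : Provable (φ.imp ψ) → Provable φ → Provable ψ
  | necK {G : Grp n} {φ} : Provable φ → Provable (Formula.K G φ)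

/-- Conjunction of a finite list of formulas. -/
def conj {P n} (L : List (Formula P n)) : Formula P n := L.foldr Formula.and Formula.top

/-- SDKH-consistency of a set of formulas. -/
def Consistent {P n} (X : Set (Formula P n)) : Prop :=
  ¬ ∃ L : List (Formula P n), (∀ φ ∈ L, φ ∈ X) ∧ Provable ((conj L).imp Formula.bot)

/-- Maximal consistent sets. -/
def MCS {P n} (X : Set (Formula P n)) : Prop :=
  Consistent X ∧ ∀ φ ∉ X, ¬ Consistent (insert φ X)

/-! ### The canonical model -/

/-- One step ⟨(φ,G),H⟩X of a mixed sequence. -/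
structure CStep (P : Type) (n : ℕ) where
  fml : Formula P n
  G : Grp n
  H : Grp n
  X : Set (Formula P n)

instance {P n} : Inhabited (CStep P n) := ⟨⟨.top, ∅, ∅, ∅⟩⟩

/-- The conditions on a mixed sequence X_0⟨(φ_1,G_1),H_1⟩X_1⋯⟨(φ_n,G_n),H_n⟩X_n
(the previous MCS being `X`). -/
def goodFrom {P n} : Set (Formula P n) → List (CStep P n) → Prop
  | _, [] => True
  | X, c :: rest =>
      MCS c.X ∧ c.G ≠ ∅ ∧ (Formula.Kh c.G c.fml) ∈ X ∧ (Formula.K c.G c.fml) ∈ c.X ∧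
      (∀ ψ, (Formula.K c.H ψ) ∈ X → ψ ∈ c.X) ∧ goodFrom c.X rest

/-- The final MCS `ed(s)` of a mixed sequence. -/
def edOf {P n} (X0 : Set (Formula P n)) (l : List (CStep P n)) : Set (Formula P n) :=
  l.foldl (fun _ c => c.X) X0

/-- States of the canonical model: mixed sequences starting at X_0. -/
def CState {P : Type} {n : ℕ} (X0 : Set (Formula P n)) := {l : List (CStep P n) // goodFrom X0 l}

/-- Canonical epistemic relation ∼^c_i. -/
def csim {P n} (X0 : Set (Formula P n)) (i : Fin n) (s t : CState X0) : Prop :=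
  ∃ k : ℕ, k ≤ s.1.length ∧ k ≤ t.1.length ∧
    (∀ j < k, (s.1.getD j default).X = (t.1.getD j default).X ∧
              (s.1.getD j default).H = (t.1.getD j default).H) ∧
    (∀ j, k ≤ j → j < s.1.length → i ∈ (s.1.getD j default).H) ∧
    (∀ j, k ≤ j → j < t.1.length → i ∈ (t.1.getD j default).H)

/-- Canonical atomic actions: pairs (φ, G). -/
abbrev CAct (P : Type) (n : ℕ) := Formula P n × Grp n

/-- Canonical atomic action sets A^c_G = {(φ,G) : φ ∈ DKH} for G ≠ ∅, A^c_∅ = ∅. -/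
def cA {P : Type} {n : ℕ} (G : Grp n) : Set (CAct P n) := {a | a.2 = G ∧ G ≠ ∅}

/-- Canonical transition: s →_{(φ,G)} t iff t = s⟨(φ,G),G'⟩X for some G' and MCS X. -/
def ctr {P n} (X0 : Set (Formula P n)) (a : CAct P n) (s t : CState X0) : Prop :=
  ∃ (G' : Grp n) (Y : Set (Formula P n)), MCS Y ∧ t.1 = s.1 ++ [⟨a.1, a.2, G', Y⟩]

theorem csim_equiv {P n} (X0 : Set (Formula P n)) (i : Fin n) : Equivalence (csim X0 i) := by
  constructor
  · intro s
    exact ⟨s.1.length, le_rfl, le_rfl, fun j _ => ⟨rfl, rfl⟩,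
      fun j h1 h2 => absurd h2 (by omega), fun j h1 h2 => absurd h2 (by omega)⟩
  · rintro s t ⟨k, h1, h2, h3, h4, h5⟩
    exact ⟨k, h2, h1, fun j hj => ⟨(h3 j hj).1.symm, (h3 j hj).2.symm⟩, h5, h4⟩
  · rintro s t u ⟨k1, hk1s, hk1t, heq1, hs1, ht1⟩ ⟨k2, hk2t, hk2u, heq2, ht2, hu2⟩
    refine ⟨min k1 k2, le_trans (min_le_left _ _) hk1s, le_trans (min_le_right _ _) hk2u,
      ?_, ?_, ?_⟩
    · intro j hj
      have e1 := heq1 j (lt_of_lt_of_le hj (min_le_left _ _))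
      have e2 := heq2 j (lt_of_lt_of_le hj (min_le_right _ _))
      exact ⟨e1.1.trans e2.1, e1.2.trans e2.2⟩
    · intro j hj hjs
      by_cases h : k1 ≤ j
      · exact hs1 j h hjs
      · have hj2 : k2 ≤ j := by omega
        have hjt : j < t.1.length := by omega
        have := ht2 j hj2 hjt
        have e := (heq1 j (by omega)).2
        rw [e]; exact this
    · intro j hj hju
      by_cases h : k2 ≤ j
      · exact hu2 j h hju
      · have hj1 : k1 ≤ j := by omega
        have hjt : j < t.1.length := by omega
        have := ht1 j hj1 hjt
        have e := (heq2 j (by omega)).2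
        rw [← e]; exact this

theorem cA_empty {P : Type} {n : ℕ} : (cA (P := P) (n := n) ∅) = ∅ := by
  ext a; simp [cA]

theorem cA_disj {P : Type} {n : ℕ} (G H : Grp n) (h : G ⊂ H) :
    cA (P := P) (n := n) G ∩ cA H = ∅ := by
  ext a
  simp only [Set.mem_inter_iff, Set.mem_empty_iff_false, iff_false, cA, Set.mem_setOf_eq]
  rintro ⟨⟨rfl, -⟩, ⟨h2, -⟩⟩
  exact h.ne h2

/-- The canonical model M^c(X_0). -/
def canonicalModel {P : Type} {n : ℕ} (X0 : Set (Formula P n)) : KhModel P n where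
  State := CState X0
  Act := CAct P n
  sim := csim X0
  sim_equiv := csim_equiv X0
  A := cA
  A_empty := cA_empty
  A_disj := cA_disj
  tr := ctr X0
  V := fun p => {s : CState X0 | Formula.atom p ∈ edOf X0 s.1}


/-!
Canonical model. A consistent set extends (Zorn) to a maximal consistent set `X₀`; a state is a
finite sequence `X₀⟨(φ₁,G₁),H₁⟩X₁⋯⟨(φₖ,Gₖ),Hₖ⟩Xₖ` of maximal consistent sets in which
`Kh_{Gⱼ} φⱼ ∈ Xⱼ₋₁`, `K_{Gⱼ} φⱼ ∈ Xⱼ` and every `ψ` with `K_{Hⱼ} ψ ∈ Xⱼ₋₁` lies in `Xⱼ`; the step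
`j` is an execution of the action `(φⱼ,Gⱼ)` that the agents of `Hⱼ` cannot tell apart from staying.
By 4 and 5, `K_G`-formulas are preserved along steps with `G ⊆ Hⱼ`, which gives the truth lemma
for `K`.

For `Kh_G φ` in the last set, the strategy "perform `(φ,G)` while `K_G φ` fails" stops after one
step, in `K_G φ`. Conversely, if `Kh_G φ` fails at a state, every action `(ψ,G')` with `G' ⊆ G`
that a strategy of `G` may prescribe there has an execution on which `Kh_G φ` still fails:
otherwise `K_∅(K_{G'} ψ → Kh_G φ)`, and AxEmpMono, AxKhtoKhK, AxKhMono and AxKhKh would give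
`Kh_G φ`. Hence a terminating strategy reaches a leaf where `Kh_G φ`, so also `K_G φ`, fails.
-/

section Derivations

variable {P : Type} {n : ℕ}

open Formula

@[grind =] lemma beval_imp (v : Formula P n → Bool) (a b : Formula P n) :
    beval v (a.imp b) = (!(beval v a) || beval v b) := by
  simp only [Formula.imp, beval]
  cases beval v a <;> cases beval v b <;> rfl

@[grind =] lemma beval_bot (v : Formula P n → Bool) : beval v (bot : Formula P n) = false := rfl

lemma Provable.imp_trans {a b c : Formula P n} (hab : Provable (a.imp b))
    (hbc : Provable (b.imp c)) : Provable (a.imp c) :=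
  .mp (.mp (.taut fun v => by grind) hab) hbc

lemma provable_conj_imp_of_mem {L : List (Formula P n)} {ψ : Formula P n} (h : ψ ∈ L) :
    Provable ((conj L).imp ψ) := by
  induction L with
  | nil => cases h
  | cons a L ih =>
    rcases List.mem_cons.mp h with rfl | h
    · exact .taut fun v => by grind [beval, conj]
    · exact (Provable.taut fun v => by grind [beval, conj]).imp_trans (ih h)

lemma provable_imp_conj {χ : Formula P n} {L : List (Formula P n)}
    (h : ∀ ψ ∈ L, Provable (χ.imp ψ)) : Provable (χ.imp (conj L)) := by
  induction L with
  | nil => exact .taut fun v => by grind [beval, conj]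
  | cons a L ih =>
    refine .mp (.mp (.taut fun v => ?_) (h a List.mem_cons_self))
      (ih fun ψ hψ => h ψ (List.mem_cons_of_mem a hψ))
    grind [beval, conj]

lemma provable_conj_imp_conj {L L' : List (Formula P n)} (h : ∀ ψ ∈ L', ψ ∈ L) :
    Provable ((conj L).imp (conj L')) :=
  provable_imp_conj fun _ hψ => provable_conj_imp_of_mem (h _ hψ)

def Derives (Γ : Set (Formula P n)) (φ : Formula P n) : Prop :=
  ∃ L : List (Formula P n), (∀ ψ ∈ L, ψ ∈ Γ) ∧ Provable ((conj L).imp φ)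

namespace Derives

variable {Γ : Set (Formula P n)} {a b : Formula P n}

lemma of_mem (h : a ∈ Γ) : Derives Γ a :=
  ⟨[a], by simpa using h, provable_conj_imp_of_mem List.mem_cons_self⟩

lemma of_provable (h : Provable a) : Derives Γ a :=
  ⟨[], by simp, .mp (.taut fun v => by grind) h⟩

lemma mp (hab : Derives Γ (a.imp b)) (ha : Derives Γ a) : Derives Γ b := by
  obtain ⟨L₁, hL₁, h₁⟩ := hab
  obtain ⟨L₂, hL₂, h₂⟩ := ha
  refine ⟨L₁ ++ L₂, by simpa [or_imp, forall_and] using And.intro hL₁ hL₂, ?_⟩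
  have e₁ := provable_conj_imp_conj (L := L₁ ++ L₂) fun _ => List.mem_append_left L₂
  have e₂ := provable_conj_imp_conj (L := L₁ ++ L₂) fun _ => List.mem_append_right L₁
  exact .mp (.mp (.taut fun v => by grind) (e₁.imp_trans h₁)) (e₂.imp_trans h₂)

lemma deduction (h : Derives (insert a Γ) b) : Derives Γ (a.imp b) := by
  classical
  obtain ⟨L, hL, hp⟩ := h
  refine ⟨L.filter (· ≠ a), fun ψ hψ => ?_, ?_⟩
  · simp only [List.mem_filter, decide_eq_true_eq] at hψ
    exact (hL ψ hψ.1).resolve_left hψ.2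
  · have hsplit : Provable ((conj (a :: L.filter (· ≠ a))).imp (conj L)) :=
      provable_conj_imp_conj fun ψ hψ => by by_cases h : ψ = a <;> simp [h, hψ]
    exact .mp (.taut fun v => by grind [beval, conj]) (hsplit.imp_trans hp)

end Derives

lemma consistent_insert_neg {S : Set (Formula P n)} {χ : Formula P n} (h : ¬ Derives S χ) :
    Consistent (insert χ.neg S) := fun hbot =>
  h ((Derives.of_provable (.taut fun v => by grind [beval])).mp (Derives.deduction hbot))

namespace MCS

variable {X : Set (Formula P n)} {a b χ : Formula P n}

lemma not_consistent_insert (hX : MCS X) (h : χ ∉ X) : Derives (insert χ X) bot :=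
  not_not.mp (hX.2 χ h)

lemma mem_of_derives (hX : MCS X) (h : Derives X χ) : χ ∈ X :=
  by_contra fun hχ => hX.1 ((hX.not_consistent_insert hχ).deduction.mp h)

lemma mem_of_provable (hX : MCS X) (h : Provable χ) : χ ∈ X :=
  hX.mem_of_derives (.of_provable h)

lemma mp (hX : MCS X) (hab : a.imp b ∈ X) (ha : a ∈ X) : b ∈ X :=
  hX.mem_of_derives ((Derives.of_mem hab).mp (.of_mem ha))

lemma mp_of_provable (hX : MCS X) (hab : Provable (a.imp b)) (ha : a ∈ X) : b ∈ X :=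
  hX.mp (hX.mem_of_provable hab) ha

lemma bot_not_mem (hX : MCS X) : bot ∉ X := fun h => hX.1 (Derives.of_mem h)

lemma neg_mem_iff (hX : MCS X) : χ.neg ∈ X ↔ χ ∉ X :=
  ⟨fun hn hχ => hX.bot_not_mem
      (hX.mp (hX.mp_of_provable (.taut fun v => by grind [beval]) hχ) hn),
    fun hχ => hX.mem_of_derives ((Derives.of_provable (.taut fun v => by grind [beval])).mp
      (hX.not_consistent_insert hχ).deduction)⟩

lemma and_mem_iff (hX : MCS X) : a.and b ∈ X ↔ a ∈ X ∧ b ∈ X :=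
  ⟨fun h => ⟨hX.mp_of_provable (.taut fun v => by grind [beval]) h,
      hX.mp_of_provable (.taut fun v => by grind [beval]) h⟩,
    fun ⟨ha, hb⟩ => hX.mp (hX.mp_of_provable (.taut fun v => by grind [beval]) ha) hb⟩

lemma K_mp (hX : MCS X) {G : Grp n} (hab : K G (a.imp b) ∈ X)
    (ha : K G a ∈ X) : K G b ∈ X :=
  hX.mp_of_provable .distK (hX.and_mem_iff.2 ⟨ha, hab⟩)

lemma K_conj_mem (hX : MCS X) {G : Grp n} {L : List (Formula P n)}
    (hL : ∀ ψ ∈ L, K G ψ ∈ X) : K G (conj L) ∈ X := by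
  induction L with
  | nil => exact hX.mem_of_provable (.necK (.taut fun _ => rfl))
  | cons a L ih =>
    refine hX.K_mp (hX.K_mp (hX.mem_of_provable (.necK (.taut fun v => ?_)))
      (hL a List.mem_cons_self)) (ih fun ψ hψ => hL ψ (List.mem_cons_of_mem a hψ))
    grind [beval, conj]

lemma K_mem_of_derives (hX : MCS X) {G : Grp n}
    (h : Derives {ψ | K G ψ ∈ X} χ) : K G χ ∈ X := by
  obtain ⟨L, hL, hp⟩ := h
  exact hX.K_mp (hX.mem_of_provable (.necK hp)) (hX.K_conj_mem hL)

lemma Kh_bot_not_mem (hX : MCS X) {G : Grp n} : Kh G bot ∉ X :=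
  fun h => hX.bot_not_mem (hX.mp_of_provable .axKhbot h)

/-- Some execution from `X` of the action `(ψ, G')` of `G` avoids `Kh_G φ`. -/
lemma consistent_escape (hX : MCS X) {G G' : Grp n} {φ ψ : Formula P n}
    (hψ : Kh G' ψ ∈ X) (hG : G' ⊆ G) (hφ : Kh G φ ∉ X) :
    Consistent (insert (Kh G φ).neg
      (insert (K G' ψ) {χ | K ∅ χ ∈ X})) := by
  intro (hbot : Derives _ bot)
  have himp : K ∅ ((K G' ψ).imp (Kh G φ)) ∈ X :=
    hX.K_mem_of_derives ((Derives.of_provable (.taut fun v => by grind [beval])).mp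
      hbot.deduction.deduction)
  have hmono := hX.mp_of_provable .axT (hX.mp_of_provable (.axEmpMono (G := G')) himp)
  have hKhKh := hX.mp hmono (hX.mp_of_provable .axKhtoKhK hψ)
  exact hφ (hX.mp_of_provable .axKhKh (hX.mp_of_provable (.axKhMono hG) hKhKh))

end MCS

lemma exists_mcs_superset {S : Set (Formula P n)} (hS : Consistent S) :
    ∃ X, S ⊆ X ∧ MCS X := by
  obtain ⟨X, hSX, hX⟩ := zorn_subset_nonempty {T | S ⊆ T ∧ Consistent T}
    (fun c hc hchain ⟨T₀, hT₀⟩ => by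
      refine ⟨⋃₀ c, ⟨(hc hT₀).1.trans (Set.subset_sUnion_of_mem hT₀), ?_⟩,
        fun _ hT => Set.subset_sUnion_of_mem hT⟩
      rintro ⟨L, hL, hp⟩
      obtain ⟨T, hTc, hLT⟩ := hchain.directedOn.exists_mem_subset_of_finite_of_subset_sUnion
        ⟨T₀, hT₀⟩ L.finite_toSet hL
      exact (hc hTc).2 ⟨L, fun ψ hψ => hLT hψ, hp⟩)
    S ⟨subset_rfl, hS⟩
  exact ⟨X, hSX, hX.prop.2, fun φ hφ hcons =>
    hφ (hX.mem_of_prop_insert ⟨hX.prop.1.trans (Set.subset_insert _ _), hcons⟩)⟩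

end Derivations

section Executions

variable {P : Type} {n : ℕ} {M : KhModel P n} {G : Grp n} {s t u : M.State}

lemma gsim_refl (M : KhModel P n) (G : Grp n) (s : M.State) : gsim M G s s :=
  fun i _ => (M.sim_equiv i).refl s

lemma gsim.symm (h : gsim M G s t) : gsim M G t s :=
  fun i hi => (M.sim_equiv i).symm (h i hi)

lemma gsim.trans (h₁ : gsim M G s t) (h₂ : gsim M G t u) : gsim M G s u :=
  fun i hi => (M.sim_equiv i).trans (h₁ i hi) (h₂ i hi)

variable {σ : Strategy M G}

lemma stepRel_of_gsim_left (h : gsim M G s t) (htu : stepRel σ t u) : stepRel σ s u :=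
  let ⟨d, hd, v, w, hv, hw, hvw⟩ := htu
  ⟨d, (σ.uniform s t h).trans hd, v, w, h.trans hv, hw, hvw⟩

lemma stepRel_of_gsim_right (hst : stepRel σ s t) (h : gsim M G t u) : stepRel σ s u :=
  let ⟨d, hd, v, w, hv, hw, hvw⟩ := hst
  ⟨d, hd, v, w, hv, h.symm.trans hw, hvw⟩

lemma mem_CELeaf_of_gsim (ht : t ∈ CELeaf σ s) (h : gsim M G t u) : u ∈ CELeaf σ s :=
  let ⟨m, f, h₀, hf, hnone, hm⟩ := ht
  ⟨m, f, h₀, hf, hnone, hm.trans h⟩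

lemma mem_CELeaf_cases (ht : t ∈ CELeaf σ s) :
    σ.act t = none ∧ (gsim M G s t ∨ ∃ u, stepRel σ u t) := by
  obtain ⟨m, f, h₀, hf, hnone, hm⟩ := ht
  refine ⟨(σ.uniform _ _ hm).symm.trans hnone, ?_⟩
  cases m with
  | zero => exact .inl (h₀.trans hm)
  | succ m => exact .inr ⟨f m, stepRel_of_gsim_right (hf m m.lt_succ_self) hm⟩

def Reachable (σ : Strategy M G) (s t : M.State) : Prop :=
  ∃ (m : ℕ) (f : ℕ → M.State), gsim M G s (f 0) ∧
    (∀ j < m, stepRel σ (f j) (f (j + 1))) ∧ gsim M G (f m) t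

lemma Reachable.refl (σ : Strategy M G) (s : M.State) : Reachable σ s s :=
  ⟨0, fun _ => s, gsim_refl M G s, fun _ h => absurd h (Nat.not_lt_zero _), gsim_refl M G s⟩

lemma Reachable.tail (h : Reachable σ s t) (htu : stepRel σ t u) : Reachable σ s u := by
  obtain ⟨m, f, h₀, hf, hm⟩ := h
  refine ⟨m + 1, fun j => if j ≤ m then f j else u, by simpa using h₀, fun j hj => ?_,
    by simpa using gsim_refl M G u⟩
  rcases Nat.lt_succ_iff_lt_or_eq.1 hj with hj | rfl
  · simpa [hj.le, Nat.succ_le_of_lt hj] using hf j hj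
  · simpa using stepRel_of_gsim_left hm htu

lemma mem_CELeaf_of_reachable (h : Reachable σ s t) (hnone : σ.act t = none) :
    t ∈ CELeaf σ s :=
  let ⟨m, f, h₀, hf, hm⟩ := h
  ⟨m, f, h₀, hf, (σ.uniform _ _ hm).trans hnone, hm⟩

lemma infiniteFrom_of_forall_exists_stepRel (Q : M.State → Prop) (hs : Q s)
    (h : ∀ t, Q t → ∃ u, stepRel σ t u ∧ Q u) : InfiniteFrom σ s := by
  choose! next hstep hnext using h
  have hQ : ∀ j, Q (next^[j] s) := fun j => by
    induction j with
    | zero => exact hs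
    | succ j ih => rw [Function.iterate_succ_apply']; exact hnext _ ih
  exact ⟨fun j => next^[j] s, gsim_refl M G s,
    fun j => by simpa only [Function.iterate_succ_apply'] using hstep _ (hQ j)⟩

lemma exists_mem_CELeaf_of_not_infiniteFrom (hfin : ¬ InfiniteFrom σ s) (Q : M.State → Prop)
    (hs : Q s) (hstep : ∀ t, Q t → σ.act t ≠ none → ∃ u, stepRel σ t u ∧ Q u) :
    ∃ t ∈ CELeaf σ s, Q t := by
  by_contra! hno
  refine hfin (infiniteFrom_of_forall_exists_stepRel (fun t => Reachable σ s t ∧ Q t)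
    ⟨.refl σ s, hs⟩ fun t ⟨hr, hq⟩ => ?_)
  obtain ⟨u, htu, hu⟩ := hstep t hq fun hnone => hno t (mem_CELeaf_of_reachable hr hnone) hq
  exact ⟨u, htu, hr.tail htu, hu⟩

end Executions

section SequenceModel

variable {P : Type} {n : ℕ}

open Formula

/-- One step of `goodFrom`, without the requirement `c.G ≠ ∅`. -/
def GoodStep (X : Set (Formula P n)) (c : CStep P n) : Prop :=
  MCS c.X ∧ Kh c.G c.fml ∈ X ∧ K c.G c.fml ∈ c.X ∧ ∀ ψ, K c.H ψ ∈ X → ψ ∈ c.X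

/-- `goodFrom` with `GoodStep`: steps with acting group `∅` supply `K_∅`-witnesses even when
there are no agents at all, where `canonicalModel` has a single state. -/
def Good : Set (Formula P n) → List (CStep P n) → Prop
  | _, [] => True
  | X, c :: l => GoodStep X c ∧ Good c.X l

lemma edOf_cons (X : Set (Formula P n)) (c : CStep P n) (l : List (CStep P n)) :
    edOf X (c :: l) = edOf c.X l := rfl

lemma edOf_append_singleton (X : Set (Formula P n)) (l : List (CStep P n)) (c : CStep P n) :
    edOf X (l ++ [c]) = c.X := by
  simp [edOf, List.foldl_append]

lemma good_append_singleton {X : Set (Formula P n)} {l : List (CStep P n)} {c : CStep P n} :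
    Good X (l ++ [c]) ↔ Good X l ∧ GoodStep (edOf X l) c := by
  induction l generalizing X with
  | nil => simp [Good, edOf]
  | cons c' l ih => simp only [List.cons_append, Good, ih, edOf_cons, and_assoc]

lemma mcs_edOf {X : Set (Formula P n)} {l : List (CStep P n)} (hX : MCS X) (hl : Good X l) :
    MCS (edOf X l) := by
  induction l generalizing X with
  | nil => exact hX
  | cons c l ih => exact ih hl.1.1 hl.2

/-- The relation `csim` of `canonicalModel`, on arbitrary sequences. -/
def lsim (i : Fin n) (l m : List (CStep P n)) : Prop :=
  ∃ k : ℕ, k ≤ l.length ∧ k ≤ m.length ∧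
    (∀ j < k, (l.getD j default).X = (m.getD j default).X ∧
              (l.getD j default).H = (m.getD j default).H) ∧
    (∀ j, k ≤ j → j < l.length → i ∈ (l.getD j default).H) ∧
    (∀ j, k ≤ j → j < m.length → i ∈ (m.getD j default).H)

theorem lsim_equiv (i : Fin n) : Equivalence (lsim (P := P) i) := by
  refine ⟨fun l => ⟨l.length, le_rfl, le_rfl, fun _ _ => ⟨rfl, rfl⟩,
      fun _ h1 h2 => absurd h2 (by omega), fun _ h1 h2 => absurd h2 (by omega)⟩,
    fun ⟨k, h1, h2, h3, h4, h5⟩ => ⟨k, h2, h1, fun j hj => ⟨(h3 j hj).1.symm, (h3 j hj).2.symm⟩,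
      h5, h4⟩, ?_⟩
  rintro l m r ⟨k₁, hl₁, hm₁, heq₁, hl, hm⟩ ⟨k₂, hm₂, hr₂, heq₂, hm', hr⟩
  refine ⟨min k₁ k₂, by omega, by omega, fun j hj => ?_, fun j hj hjl => ?_, fun j hj hjr => ?_⟩
  · exact ⟨(heq₁ j (by omega)).1.trans (heq₂ j (by omega)).1,
      (heq₁ j (by omega)).2.trans (heq₂ j (by omega)).2⟩
  · by_cases h : k₁ ≤ j
    · exact hl j h hjl
    · exact (heq₁ j (by omega)).2 ▸ hm' j (by omega) (by omega)
  · by_cases h : k₂ ≤ j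
    · exact hr j h hjr
    · exact (heq₂ j (by omega)).2 ▸ hm j (by omega) (by omega)

lemma lsim_append_singleton {l : List (CStep P n)} {c : CStep P n} {i : Fin n} (hi : i ∈ c.H) :
    lsim i l (l ++ [c]) := by
  refine ⟨l.length, le_rfl, by simp, fun j hj => ?_, fun j _ _ => by omega, fun j hj hjl => ?_⟩
  · simp [List.getD_eq_getElem?_getD, List.getElem?_append_left hj]
  · obtain rfl : j = l.length := by simp at hjl; omega
    simpa [List.getD_eq_getElem?_getD] using hi

def SeqState (X₀ : Set (Formula P n)) := {l : List (CStep P n) // Good X₀ l}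

def seqTr (X₀ : Set (Formula P n)) (a : CAct P n) (s t : SeqState X₀) : Prop :=
  ∃ (H : Grp n) (Y : Set (Formula P n)), t.1 = s.1 ++ [⟨a.1, a.2, H, Y⟩]

def seqModel (X₀ : Set (Formula P n)) : KhModel P n where
  State := SeqState X₀
  Act := CAct P n
  sim i s t := lsim i s.1 t.1
  sim_equiv i := (lsim_equiv i).comap Subtype.val
  A := cA
  A_empty := cA_empty
  A_disj := cA_disj
  tr := seqTr X₀
  V p := {s | atom p ∈ edOf X₀ s.1}

namespace SeqState

variable {X₀ : Set (Formula P n)}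

def ed (s : SeqState X₀) : Set (Formula P n) := edOf X₀ s.1

lemma mcs_ed (hX₀ : MCS X₀) (s : SeqState X₀) : MCS s.ed := mcs_edOf hX₀ s.2

def snoc (s : SeqState X₀) (c : CStep P n) (hc : GoodStep s.ed c) : SeqState X₀ :=
  ⟨s.1 ++ [c], good_append_singleton.2 ⟨s.2, hc⟩⟩

variable {s : SeqState X₀} {c : CStep P n} {hc : GoodStep s.ed c}

lemma ed_of_eq_append {t : SeqState X₀} (h : t.1 = s.1 ++ [c]) : t.ed = c.X := by
  rw [ed, h, edOf_append_singleton]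

lemma ed_snoc : (s.snoc c hc).ed = c.X := ed_of_eq_append rfl

lemma seqTr_snoc : seqTr X₀ (c.fml, c.G) s (s.snoc c hc) := ⟨c.H, c.X, rfl⟩

lemma gsim_snoc {G : Grp n} (hG : G ⊆ c.H) : gsim (seqModel X₀) G s (s.snoc c hc) :=
  fun _ hi => lsim_append_singleton (hG hi)

lemma goodStep_of_eq_append {t : SeqState X₀} (h : t.1 = s.1 ++ [c]) : GoodStep s.ed c :=
  (good_append_singleton.1 (h ▸ t.2)).2

end SeqState

end SequenceModel

section KnowledgeTransfer

variable {P : Type} {n : ℕ}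

open Formula

lemma K_mem_iff_of_goodStep {Y : Set (Formula P n)} {c : CStep P n} {G : Grp n}
    (hY : MCS Y) (hc : GoodStep Y c) (hG : G ⊆ c.H) (χ : Formula P n) :
    K G χ ∈ Y ↔ K G χ ∈ c.X := by
  refine ⟨fun h => hc.2.2.2 _ (hY.mp_of_provable (.axKMono hG) (hY.mp_of_provable .ax4 h)),
    fun h => by_contra fun hn => ?_⟩
  have hKn := hY.mp_of_provable .ax5 ((hY.neg_mem_iff).2 hn)
  exact (hc.1.neg_mem_iff).1 (hc.2.2.2 _ (hY.mp_of_provable (.axKMono hG) hKn)) h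

lemma K_mem_edOf_iff_take {G : Grp n} {χ : Formula P n} :
    ∀ {X : Set (Formula P n)} {l : List (CStep P n)} (k : ℕ), MCS X → Good X l →
      (∀ j, k ≤ j → j < l.length → G ⊆ (l.getD j default).H) →
      (K G χ ∈ edOf X l ↔ K G χ ∈ edOf X (l.take k))
  | _, [], _, _, _, _ => by simp
  | _, c :: l, 0, hX, ⟨hc, hl⟩, hH => by
    have htail := K_mem_edOf_iff_take (χ := χ) 0 hc.1 hl fun j _ hjl => by
      simpa using hH (j + 1) (by omega) (by simpa using hjl)
    rw [edOf_cons, htail]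
    exact (K_mem_iff_of_goodStep hX hc (hH 0 le_rfl (by simp)) χ).symm
  | _, c :: l, k + 1, _, ⟨hc, hl⟩, hH =>
    K_mem_edOf_iff_take k hc.1 hl fun j _ hjl => by
      simpa using hH (j + 1) (by omega) (by simpa using hjl)

lemma edOf_take_congr : ∀ {X : Set (Formula P n)} {l m : List (CStep P n)} {k : ℕ},
    k ≤ l.length → k ≤ m.length → (∀ j < k, (l.getD j default).X = (m.getD j default).X) →
    edOf X (l.take k) = edOf X (m.take k)
  | _, _, _, 0, _, _, _ => rfl
  | _, c :: l, d :: m, k + 1, hl, hm, h => by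
    simp only [List.take_succ_cons, edOf_cons, show c.X = d.X from h 0 (by omega)]
    exact edOf_take_congr (by simpa using hl) (by simpa using hm)
      fun j hj => by simpa using h (j + 1) (by omega)
  | _, [], _, _ + 1, hl, _, _ => by simp at hl
  | _, _, [], _ + 1, _, hm, _ => by simp at hm

lemma exists_common_prefix_of_forall_lsim {G : Grp n} {l m : List (CStep P n)}
    (h : ∀ i ∈ G, lsim i l m) :
    ∃ k, k ≤ l.length ∧ k ≤ m.length ∧
      (∀ j < k, (l.getD j default).X = (m.getD j default).X) ∧
      (∀ j, k ≤ j → j < l.length → G ⊆ (l.getD j default).H) ∧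
      (∀ j, k ≤ j → j < m.length → G ⊆ (m.getD j default).H) := by
  induction G using Finset.induction_on with
  | empty => exact ⟨0, by simp, by simp, by simp, by simp, by simp⟩
  | insert i G _ ih =>
    obtain ⟨k₁, hl₁, hm₁, heq₁, hGl, hGm⟩ := ih fun i' hi' => h i' (Finset.mem_insert_of_mem hi')
    obtain ⟨k₂, hl₂, hm₂, heq₂, hil, him⟩ := h i (Finset.mem_insert_self _ _)
    refine ⟨max k₁ k₂, by omega, by omega, fun j hj => ?_, fun j hj hjl => ?_, fun j hj hjm => ?_⟩
    · rcases le_total k₁ k₂ with hk | hk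
      · exact (heq₂ j (by omega)).1
      · exact heq₁ j (by omega)
    · exact Finset.insert_subset (hil j (by omega) hjl) (hGl j (by omega) hjl)
    · exact Finset.insert_subset (him j (by omega) hjm) (hGm j (by omega) hjm)

variable {X₀ : Set (Formula P n)} {G : Grp n} {s t : SeqState X₀}

lemma K_mem_ed_iff_of_gsim (hX₀ : MCS X₀) (h : gsim (seqModel X₀) G s t) (χ : Formula P n) :
    K G χ ∈ s.ed ↔ K G χ ∈ t.ed := by
  obtain ⟨k, hks, hkt, heq, hGs, hGt⟩ := exists_common_prefix_of_forall_lsim h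
  rw [SeqState.ed, SeqState.ed, K_mem_edOf_iff_take k hX₀ s.2 hGs,
    K_mem_edOf_iff_take k hX₀ t.2 hGt, edOf_take_congr hks hkt heq]

lemma mem_ed_of_K_mem_of_gsim (hX₀ : MCS X₀) (h : gsim (seqModel X₀) G s t)
    {χ : Formula P n} (hK : K G χ ∈ s.ed) : χ ∈ t.ed :=
  (t.mcs_ed hX₀).mp_of_provable .axT ((K_mem_ed_iff_of_gsim hX₀ h χ).1 hK)

lemma Kh_mem_ed_iff_of_gsim (hX₀ : MCS X₀) (h : gsim (seqModel X₀) G s t) (χ : Formula P n) :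
    Kh G χ ∈ s.ed ↔ Kh G χ ∈ t.ed :=
  ⟨fun hs => mem_ed_of_K_mem_of_gsim hX₀ h ((s.mcs_ed hX₀).mp_of_provable .axKhtoKKh hs),
    fun ht => mem_ed_of_K_mem_of_gsim hX₀ h.symm ((t.mcs_ed hX₀).mp_of_provable .axKhtoKKh ht)⟩

lemma K_mem_ed_iff (hX₀ : MCS X₀) (s : SeqState X₀) (χ : Formula P n) :
    K G χ ∈ s.ed ↔ ∀ t : SeqState X₀, gsim (seqModel X₀) G s t → χ ∈ t.ed := by
  refine ⟨fun hK t h => mem_ed_of_K_mem_of_gsim hX₀ h hK, fun h => by_contra fun hK => ?_⟩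
  have hs := s.mcs_ed hX₀
  obtain ⟨X, hX, hXmcs⟩ := exists_mcs_superset (consistent_insert_neg fun hd =>
    hK (hs.K_mem_of_derives hd))
  have hc : GoodStep s.ed ⟨top, G, G, X⟩ :=
    ⟨hXmcs, hs.mp_of_provable .axKtoKh (hs.mem_of_provable (.necK (.taut fun _ => rfl))),
      hXmcs.mem_of_provable (.necK (.taut fun _ => rfl)), fun ψ hψ => hX (Or.inr hψ)⟩
  have hχ := h _ (SeqState.gsim_snoc (hc := hc) subset_rfl)
  rw [SeqState.ed_snoc] at hχ
  exact (hXmcs.neg_mem_iff.1 (hX (Set.mem_insert _ _))) hχ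

end KnowledgeTransfer

section KnowHow

variable {P : Type} {n : ℕ} {X₀ : Set (Formula P n)}

open Formula

/-- Joint actions never execute in `seqModel`: every transition appends a single step, and two
components acting for disjoint nonempty groups would have to append the same step. -/
theorem eq_atom_of_star_of_dtr : ∀ {G : Grp n} {d : DAct (CAct P n)} {s u : SeqState X₀},
    star cA G d → dtr (seqTr X₀) d s u →
    ∃ c : CStep P n, u.1 = s.1 ++ [c] ∧ c.G ⊆ G ∧ c.G ≠ ∅ ∧ d = .atom (c.fml, c.G)
  | _, .atom a, _, _, .base hsub ⟨hG, hne⟩, ⟨H, Y, hu⟩ =>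
    ⟨⟨a.1, a.2, H, Y⟩, hu, hG ▸ hsub, hG ▸ hne, rfl⟩
  | _, .joint _, _, _, .joint _ hpp _ (.cons h₀ (.cons h₁ _)), ⟨htr₀, htr₁, _⟩ => by
    obtain ⟨c₀, hu₀, hB₀, hne, -⟩ := eq_atom_of_star_of_dtr h₀ htr₀
    obtain ⟨c₁, hu₁, hB₁, -, -⟩ := eq_atom_of_star_of_dtr h₁ htr₁
    obtain rfl : c₀ = c₁ := by simpa using hu₀.symm.trans hu₁
    have hdisj := (List.pairwise_cons.1 hpp.2.1).1 _ List.mem_cons_self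
    exact absurd (Finset.disjoint_of_subset_left hB₀ (Finset.disjoint_of_subset_right hB₁ hdisj)
      |>.eq_bot_of_self) hne
  | _, .joint _, _, _, .joint hlen _ _ .nil, _ => by simp at hlen
  | _, .joint _, _, _, .joint hlen _ _ (.cons _ .nil), _ => by simp at hlen

lemma exists_seqTr_Kh_not_mem (hX₀ : MCS X₀) (s : SeqState X₀) {G G' : Grp n}
    {φ ψ : Formula P n} (hψ : Kh G' ψ ∈ s.ed) (hG : G' ⊆ G) (hφ : Kh G φ ∉ s.ed) :
    ∃ u, seqTr X₀ (ψ, G') s u ∧ Kh G φ ∉ u.ed := by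
  obtain ⟨X, hX, hXmcs⟩ := exists_mcs_superset ((s.mcs_ed hX₀).consistent_escape hψ hG hφ)
  have hc : GoodStep s.ed ⟨ψ, G', ∅, X⟩ :=
    ⟨hXmcs, hψ, hX (by simp), fun χ hχ => hX (by simp [hχ])⟩
  refine ⟨s.snoc _ hc, SeqState.seqTr_snoc, ?_⟩
  rw [SeqState.ed_snoc]
  exact hXmcs.neg_mem_iff.1 (hX (Set.mem_insert _ _))

lemma exists_stepRel_Kh_not_mem (hX₀ : MCS X₀) {G : Grp n} (σ : Strategy (seqModel X₀) G)
    {s : SeqState X₀} {φ : Formula P n} (hφ : Kh G φ ∉ s.ed) (hact : σ.act s ≠ none) :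
    ∃ u, stepRel σ s u ∧ Kh G φ ∉ u.ed := by
  obtain ⟨d, hd⟩ := Option.ne_none_iff_exists'.1 hact
  obtain ⟨u₀, hu₀⟩ := σ.exec s d hd s (gsim_refl (seqModel X₀) G s)
  obtain ⟨c, hc, hcG, -, rfl⟩ := eq_atom_of_star_of_dtr (σ.mem_star s _ hd) hu₀
  obtain ⟨u, hu, hφu⟩ := exists_seqTr_Kh_not_mem hX₀ s
    (SeqState.goodStep_of_eq_append hc).2.1 hcG hφ
  exact ⟨u, ⟨_, hd, s, u, gsim_refl (seqModel X₀) G s, gsim_refl (seqModel X₀) G u, hu⟩, hφu⟩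

lemma Kh_mem_ed_of_strategy (hX₀ : MCS X₀) {G : Grp n} {φ : Formula P n} (s : SeqState X₀)
    (σ : Strategy (seqModel X₀) G) (hleaf : ∀ t ∈ CELeaf σ s, φ ∈ t.ed)
    (hfin : ¬ InfiniteFrom σ s) : Kh G φ ∈ s.ed := by
  by_contra hs
  obtain ⟨t, ht, hφt⟩ := exists_mem_CELeaf_of_not_infiniteFrom hfin (fun t => Kh G φ ∉ t.ed) hs
    fun _ => exists_stepRel_Kh_not_mem hX₀ σ
  have hK : K G φ ∈ t.ed := (K_mem_ed_iff hX₀ t φ).2 fun _ h => hleaf _ (mem_CELeaf_of_gsim ht h)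
  exact hφt ((t.mcs_ed hX₀).mp_of_provable .axKtoKh hK)

open Classical in
noncomputable def khStrategy (hX₀ : MCS X₀) (G : Grp n) (φ : Formula P n) :
    Strategy (seqModel X₀) G where
  act t := if G ≠ ∅ ∧ Kh G φ ∈ t.ed ∧ K G φ ∉ t.ed then some (.atom (φ, G)) else none
  uniform t t' h := by
    simp only [Kh_mem_ed_iff_of_gsim hX₀ h, K_mem_ed_iff_of_gsim hX₀ h]
  mem_star t d hd := by
    split_ifs at hd with hC
    cases hd
    exact star.base subset_rfl ⟨rfl, hC.1⟩
  exec t d hd t' h := by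
    split_ifs at hd with hC
    cases hd
    have hKh := (Kh_mem_ed_iff_of_gsim hX₀ h φ).1 hC.2.1
    obtain ⟨u, hu, -⟩ := exists_seqTr_Kh_not_mem hX₀ t' hKh subset_rfl
      ((t'.mcs_ed hX₀).Kh_bot_not_mem (G := G))
    exact ⟨u, hu⟩

lemma khStrategy_act_eq_some {hX₀ : MCS X₀} {G : Grp n} {φ : Formula P n} {t : SeqState X₀}
    {d : DAct (CAct P n)} (hd : (khStrategy hX₀ G φ).act t = some d) :
    d = .atom (φ, G) ∧ K G φ ∉ t.ed := by
  simp only [khStrategy] at hd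
  split_ifs at hd with hC
  exact ⟨(Option.some.inj hd).symm, hC.2.2⟩

lemma K_mem_ed_of_stepRel_khStrategy {hX₀ : MCS X₀} {G : Grp n} {φ : Formula P n}
    {t u : SeqState X₀} (h : stepRel (khStrategy hX₀ G φ) t u) : K G φ ∈ u.ed := by
  obtain ⟨d, hd, v, w, -, hw, hvw⟩ := h
  obtain ⟨rfl, -⟩ := khStrategy_act_eq_some hd
  obtain ⟨H, Y, hvw⟩ : seqTr X₀ (φ, G) v w := hvw
  refine (K_mem_ed_iff_of_gsim hX₀ hw φ).2 ?_
  rw [SeqState.ed_of_eq_append hvw]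
  exact (SeqState.goodStep_of_eq_append hvw).2.2.1

lemma exists_strategy_of_Kh_mem_ed (hX₀ : MCS X₀) {G : Grp n} {φ : Formula P n}
    (s : SeqState X₀) (h : Kh G φ ∈ s.ed) :
    ∃ σ : Strategy (seqModel X₀) G, (∀ t ∈ CELeaf σ s, φ ∈ t.ed) ∧ ¬ InfiniteFrom σ s := by
  refine ⟨khStrategy hX₀ G φ, fun t ht => ?_, fun ⟨f, _, hf⟩ => ?_⟩
  · have htm := t.mcs_ed hX₀
    obtain ⟨hnone, hst | ⟨u, hu⟩⟩ := mem_CELeaf_cases ht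
    · have hKh := (Kh_mem_ed_iff_of_gsim hX₀ hst φ).1 h
      refine htm.mp_of_provable (.axT (G := G)) ?_
      by_cases hG : G = ∅
      · -- the empty group has no actions, and AxEmpKhtoK makes that harmless
        exact hG ▸ htm.mp_of_provable .axEmpKhtoK (hG ▸ hKh)
      · by_contra hK
        simp [khStrategy, hG, hKh, hK] at hnone
    · exact htm.mp_of_provable .axT (K_mem_ed_of_stepRel_khStrategy hu)
  · obtain ⟨d, hd, -⟩ := hf 1
    exact (khStrategy_act_eq_some hd).2 (K_mem_ed_of_stepRel_khStrategy (hf 0))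

theorem truth_lemma (hX₀ : MCS X₀) (φ : Formula P n) (s : SeqState X₀) :
    Sat (seqModel X₀) s φ ↔ φ ∈ s.ed := by
  induction φ generalizing s with
  | top => exact iff_of_true trivial ((s.mcs_ed hX₀).mem_of_provable (.taut fun _ => rfl))
  | atom p => exact Iff.rfl
  | neg ψ ih => exact (ih s).not.trans (s.mcs_ed hX₀).neg_mem_iff.symm
  | and ψ χ ih₁ ih₂ => exact (and_congr (ih₁ s) (ih₂ s)).trans (s.mcs_ed hX₀).and_mem_iff.symm
  | K G ψ ih => exact (forall₂_congr fun t _ => ih t).trans (K_mem_ed_iff hX₀ s ψ).symm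
  | Kh G ψ ih =>
    refine ⟨fun ⟨σ, hleaf, hfin⟩ => Kh_mem_ed_of_strategy hX₀ s σ
      (fun t ht => (ih t).1 (hleaf t ht)) hfin, fun h => ?_⟩
    obtain ⟨σ, hleaf, hfin⟩ := exists_strategy_of_Kh_mem_ed hX₀ s h
    exact ⟨σ, fun t ht => (ih t).2 (hleaf t ht), hfin⟩

end KnowHow

/-- Strong completeness of SDKH: every SDKH-consistent set of
formulas is satisfiable in some pointed model; equivalently, semantic
entailment implies derivability in SDKH. -/
theorem strong_completeness {P : Type} [Countable P] {n : ℕ} :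
    (∀ Γ : Set (Formula P n), Consistent Γ →
      ∃ (M : KhModel P n) (s : M.State), ∀ φ ∈ Γ, Sat M s φ) ∧
    (∀ (Γ : Set (Formula P n)) (φ : Formula P n),
      (∀ (M : KhModel P n) (s : M.State), (∀ ψ ∈ Γ, Sat M s ψ) → Sat M s φ) →
      ∃ L : List (Formula P n), (∀ ψ ∈ L, ψ ∈ Γ) ∧ Provable ((conj L).imp φ)) := by
  have model_of_consistent : ∀ Γ : Set (Formula P n), Consistent Γ →
      ∃ X₀, MCS X₀ ∧ ∀ φ ∈ Γ, Sat (seqModel X₀) (⟨[], trivial⟩ : SeqState X₀) φ := by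
    intro Γ hΓ
    obtain ⟨X₀, hΓX₀, hX₀⟩ := exists_mcs_superset hΓ
    exact ⟨X₀, hX₀, fun φ hφ => (truth_lemma hX₀ φ _).2 (hΓX₀ hφ)⟩
  refine ⟨fun Γ hΓ => ?_, fun Γ φ hent => ?_⟩
  · obtain ⟨X₀, -, hsat⟩ := model_of_consistent Γ hΓ
    exact ⟨seqModel X₀, _, hsat⟩
  · by_contra hφ
    obtain ⟨X₀, -, hsat⟩ := model_of_consistent _ (consistent_insert_neg hφ)
    exact hsat φ.neg (Set.mem_insert _ _)
      (hent _ _ fun ψ hψ => hsat ψ (Set.mem_insert_of_mem _ hψ))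

end DKH
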